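/- arXiv:2210.01709 — 8 statements merged into one kernel-verified Lean document; each statement's English description precedes it below -/
import Mathlib

section
/- If Γ ⊆ Fm is consistent and Γ ⊢_¬ α, then there exists γ ∈ Γ such that γ ⊢_¬ α. -/
/-- Formulas of the algebraic language with a single unary connective ¬,
built as the absolutely free algebra over a countably infinite set of variables. -/
inductive Fm : Type where
  | var : ℕ → Fm
  | neg : Fm → Fm

/-- `negn n α` is ¬ⁿα: ¬⁰α = α and ¬ⁿα = ¬(¬ⁿ⁻¹α). -/
def negn : ℕ → Fm → Fm
  | 0, α => α
  | n + 1, α => Fm.neg (negn n α)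

/-- The consequence relation ⊢_¬ of the Hilbert-style calculus with rules
(R1) x, ¬x ⊢ y, (R2) x ⊢ ¬¬x, (R3) ¬¬x ⊢ x: `Deriv Γ α` iff α has a finite
proof from Γ using substitution instances of these rules. -/
inductive Deriv : Set Fm → Fm → Prop where
  | mem {Γ : Set Fm} {α : Fm} : α ∈ Γ → Deriv Γ α
  | r1 {Γ : Set Fm} {α β : Fm} : Deriv Γ α → Deriv Γ (Fm.neg α) → Deriv Γ β
  | r2 {Γ : Set Fm} {α : Fm} : Deriv Γ α → Deriv Γ (Fm.neg (Fm.neg α))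
  | r3 {Γ : Set Fm} {α : Fm} : Deriv Γ (Fm.neg (Fm.neg α)) → Deriv Γ α

/-- If Γ is consistent (some formula is not derivable from Γ) and Γ ⊢_¬ α,
then there is γ ∈ Γ with γ ⊢_¬ α. -/
theorem stmt1 (Γ : Set Fm) (α : Fm) (hcons : ∃ β : Fm, ¬ Deriv Γ β)
    (h : Deriv Γ α) : ∃ γ ∈ Γ, Deriv {γ} α := by
  obtain ⟨β, hβ⟩ := hcons
  -- R1 derives every formula, so it never occurs over a consistent Γ; R2 and R3 have a single
  -- premise, so the derivation is a chain starting from one member of Γ.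
  induction h with
  | mem hγ => exact ⟨_, hγ, .mem rfl⟩
  | r1 hα hnα => exact absurd (.r1 hα hnα) hβ
  | r2 _ ih =>
    obtain ⟨γ, hγ, hd⟩ := ih
    exact ⟨γ, hγ, .r2 hd⟩
  | r3 _ ih =>
    obtain ⟨γ, hγ, hd⟩ := ih
    exact ⟨γ, hγ, .r3 hd⟩
end

section
/- For all formulas α, β ∈ Fm: α ⊢_¬ β if and only if there exist a variable x ∈ Var and n, k ∈ ℕ₀ such that α = ¬ⁿx, β = ¬ᵏx, and n ≡ k (mod 2). -/
namespace Fm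

def atom : Fm → ℕ
  | var x => x
  | neg α => atom α

def depth : Fm → ℕ
  | var _ => 0
  | neg α => depth α + 1

@[simp]
theorem atom_neg (α : Fm) : (neg α).atom = α.atom := rfl

@[simp]
theorem depth_neg (α : Fm) : (neg α).depth = α.depth + 1 := rfl

theorem negn_depth_atom : ∀ α : Fm, negn α.depth (var α.atom) = α
  | var _ => rfl
  | neg α => congrArg neg (negn_depth_atom α)

end Fm

namespace Deriv

theorem mem_of_closed {Γ S : Set Fm} (hΓ : Γ ⊆ S) (hcons : ∀ γ ∈ S, Fm.neg γ ∉ S)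
    (hr2 : ∀ γ ∈ S, Fm.neg (Fm.neg γ) ∈ S) (hr3 : ∀ γ, Fm.neg (Fm.neg γ) ∈ S → γ ∈ S)
    {β : Fm} (h : Deriv Γ β) : β ∈ S := by
  induction h with
  | mem hmem => exact hΓ hmem
  | r1 _ _ hα hnα => exact absurd hnα (hcons _ hα)
  | r2 _ ih => exact hr2 _ ih
  | r3 _ ih => exact hr3 _ ih

theorem atom_eq_and_depth_mod_two {α β : Fm} (h : Deriv {α} β) :
    β.atom = α.atom ∧ β.depth % 2 = α.depth % 2 := by
  refine mem_of_closed (S := {γ | γ.atom = α.atom ∧ γ.depth % 2 = α.depth % 2})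
    (by simp) ?_ ?_ ?_ h <;>
  · intro γ
    simp only [Set.mem_ofPred_eq, Fm.atom_neg, Fm.depth_neg]
    omega

theorem negn_add_two_iff {Γ : Set Fm} {γ : Fm} (n : ℕ) :
    Deriv Γ (negn (n + 2) γ) ↔ Deriv Γ (negn n γ) :=
  ⟨r3, r2⟩

theorem negn_iff_mod_two {Γ : Set Fm} {γ : Fm} :
    ∀ n, Deriv Γ (negn n γ) ↔ Deriv Γ (negn (n % 2) γ)
  | 0 | 1 => Iff.rfl
  | n + 2 => by rw [negn_add_two_iff, Nat.add_mod_right]; exact negn_iff_mod_two n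

end Deriv

/-- α ⊢_¬ β iff there are a variable x and n, k ∈ ℕ₀ with α = ¬ⁿx, β = ¬ᵏx
and n ≡ k (mod 2). -/
theorem stmt2 (α β : Fm) :
    Deriv {α} β ↔
      ∃ (x n k : ℕ), α = negn n (Fm.var x) ∧ β = negn k (Fm.var x) ∧ n % 2 = k % 2 := by
  constructor
  · intro h
    obtain ⟨hatom, hdepth⟩ := h.atom_eq_and_depth_mod_two
    refine ⟨α.atom, α.depth, β.depth, (Fm.negn_depth_atom α).symm, ?_, hdepth.symm⟩
    rw [← hatom, Fm.negn_depth_atom]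
  · rintro ⟨x, n, k, rfl, rfl, hnk⟩
    rw [Deriv.negn_iff_mod_two, ← hnk, ← Deriv.negn_iff_mod_two]
    exact Deriv.mem rfl
end

section
/- Let α ∈ Fm and let Δ be a theory of ⊢_¬ that is maximal relative to α (i.e., Δ is maximal among the theories not containing α). Then for every formula β ∈ Fm, β ∈ Δ if and only if ¬β ∉ Δ. -/
/-- A theory of ⊢_¬ is a set of formulas closed under derivability. -/
def IsTheory (Δ : Set Fm) : Prop := ∀ β : Fm, Deriv Δ β → β ∈ Δ

/-!
Every formula is `¬ᵏp` for a variable `p`, and by (R2)/(R3) a theory contains `¬ᵏp` iff it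
contains `¬ᵏ⁺²p`. If neither `β = ¬ᵏp` nor `¬β` lies in `Δ`, then no `¬ᵐp` does, and adding to
`Δ` all `¬ᵐp` with `m` of one fixed parity yields a theory: (R1) never applies to two of the new
formulas, since their negation depths have the same parity. Both parities give theories strictly
above `Δ`, so both contain `α`; as `α ∉ Δ`, `α = ¬ᵃp` with `a` of both parities.
-/

namespace Fm

def negDepth : Fm → ℕ
  | var _ => 0
  | neg γ => negDepth γ + 1

theorem negDepth_negn (n : ℕ) (γ : Fm) : negDepth (negn n γ) = n + negDepth γ := by
  induction n with
  | zero => simp [negn]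
  | succ n ih => simp only [negn, negDepth, ih]; omega

theorem eq_of_negn_var_eq {a b v w : ℕ} (h : negn a (var v) = negn b (var w)) : a = b := by
  simpa [negDepth_negn, negDepth] using congrArg negDepth h

theorem exists_eq_negn_var (γ : Fm) : ∃ n v, γ = negn n (var v) := by
  induction γ with
  | var v => exact ⟨0, v, rfl⟩
  | neg δ ih => obtain ⟨n, v, rfl⟩ := ih; exact ⟨n + 1, v, rfl⟩

end Fm

open Fm

def parityClass (v c : ℕ) : Set Fm := {γ | ∃ m, m % 2 = c % 2 ∧ γ = negn m (var v)}

theorem negn_mem_parityClass (v c : ℕ) : negn c (var v) ∈ parityClass v c := ⟨c, rfl, rfl⟩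

theorem neg_mem_parityClass_iff {v c : ℕ} {γ : Fm} :
    neg γ ∈ parityClass v c ↔ γ ∈ parityClass v (c + 1) := by
  constructor
  · rintro ⟨m, hm, he⟩
    match m, he with
    | m + 1, he => exact ⟨m, by omega, neg.inj he⟩
  · rintro ⟨m, hm, rfl⟩
    exact ⟨m + 1, by omega, rfl⟩

theorem parityClass_add_two (v c : ℕ) : parityClass v (c + 2) = parityClass v c := by
  simp [parityClass, Nat.add_mod_right]

theorem disjoint_parityClass_succ (v c : ℕ) :
    Disjoint (parityClass v c) (parityClass v (c + 1)) := by
  rw [Set.disjoint_left]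
  rintro _ ⟨a, ha, rfl⟩ ⟨b, hb, he⟩
  have := eq_of_negn_var_eq he
  omega

namespace IsTheory

variable {Δ : Set Fm}

theorem negn_add_two_mem_iff (hΔ : IsTheory Δ) {n : ℕ} {γ : Fm} :
    negn (n + 2) γ ∈ Δ ↔ negn n γ ∈ Δ :=
  ⟨fun h => hΔ _ (.r3 (.mem h)), fun h => hΔ _ (.r2 (.mem h))⟩

theorem negn_mem_iff_mod_two (hΔ : IsTheory Δ) (n : ℕ) (γ : Fm) :
    negn n γ ∈ Δ ↔ negn (n % 2) γ ∈ Δ := by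
  induction n using Nat.strong_induction_on with
  | _ n ih =>
    match n with
    | 0 | 1 => rfl
    | n + 2 => rw [hΔ.negn_add_two_mem_iff, ih n (by omega), Nat.add_mod_right]

theorem negn_not_mem (hΔ : IsTheory Δ) {k : ℕ} {γ : Fm}
    (h₀ : negn k γ ∉ Δ) (h₁ : negn (k + 1) γ ∉ Δ) (m : ℕ) : negn m γ ∉ Δ := by
  have hm : m % 2 = k % 2 ∨ m % 2 = (k + 1) % 2 := by omega
  rw [hΔ.negn_mem_iff_mod_two] at h₀ h₁ ⊢
  rcases hm with hm | hm <;> rwa [hm]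

theorem union_parityClass (hΔ : IsTheory Δ) {v : ℕ} (hv : ∀ m, negn m (var v) ∉ Δ) (c : ℕ) :
    IsTheory (Δ ∪ parityClass v c) := by
  have hP : ∀ c', Disjoint Δ (parityClass v c') := fun c' =>
    Set.disjoint_right.2 fun _ ⟨_, _, he⟩ => he ▸ hv _
  intro γ hγ
  induction hγ with
  | mem h => exact h
  | @r1 δ _ _ _ ih₁ ih₂ =>
    rw [Set.mem_union, neg_mem_parityClass_iff] at ih₂
    rcases ih₁ with h₁ | h₁ <;> rcases ih₂ with h₂ | h₂
    · exact .inl (hΔ _ (.r1 (.mem h₁) (.mem h₂)))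
    · exact absurd h₂ ((hP _).notMem_of_mem_left h₁)
    · have : neg δ ∈ parityClass v (c + 1) := by
        rwa [neg_mem_parityClass_iff, parityClass_add_two]
      exact absurd this ((hP _).notMem_of_mem_left h₂)
    · exact absurd h₂ ((disjoint_parityClass_succ v c).notMem_of_mem_left h₁)
  | r2 _ ih =>
    rcases ih with h | h
    · exact .inl (hΔ _ (.r2 (.mem h)))
    · exact .inr (by rwa [neg_mem_parityClass_iff, neg_mem_parityClass_iff, parityClass_add_two])
  | r3 _ ih =>
    rcases ih with h | h
    · exact .inl (hΔ _ (.r3 (.mem h)))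
    · exact .inr (by rwa [neg_mem_parityClass_iff, neg_mem_parityClass_iff, parityClass_add_two] at h)

end IsTheory

/-- If Δ is a theory maximal relative to α (α ∉ Δ and every theory strictly
containing Δ contains α), then for every β: β ∈ Δ iff ¬β ∉ Δ. -/
theorem stmt4 (α : Fm) (Δ : Set Fm) (hth : IsTheory Δ) (hα : α ∉ Δ)
    (hmax : ∀ Δ' : Set Fm, IsTheory Δ' → Δ ⊂ Δ' → α ∈ Δ') :
    ∀ β : Fm, β ∈ Δ ↔ Fm.neg β ∉ Δ := by
  intro β
  refine ⟨fun hβ hnβ => hα (hth α (.r1 (.mem hβ) (.mem hnβ))), fun hnβ => ?_⟩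
  by_contra hβ
  obtain ⟨k, v, rfl⟩ := exists_eq_negn_var β
  have hv := hth.negn_not_mem hβ hnβ
  have hα_mem : ∀ c, α ∈ parityClass v c := fun c =>
    have hsub : Δ ⊂ Δ ∪ parityClass v c :=
      Set.ssubset_union_left_iff.2 fun h => hv c (h (negn_mem_parityClass v c))
    (hmax _ (hth.union_parityClass hv c) hsub).resolve_left hα
  exact (disjoint_parityClass_succ v k).notMem_of_mem_left (hα_mem k) (hα_mem (k + 1))
end

section
/- The Hilbert calculus with rules (R1) x, ¬x ⊢ y, (R2) x ⊢ ¬¬x, (R3) ¬¬x ⊢ x axiomatizes the {¬}-fragment of classical propositional logic: for all Γ ∪ {α} ⊆ Fm, Γ ⊢_¬ α if and only if Γ ⊢_N α. -/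
/-- The {¬}-fragment ⊢_N of classical propositional logic: Γ ⊢_N α iff every
homomorphism h from Fm to the two-element algebra 2_¬ = ⟨{0,1},¬⟩ (¬0 = 1, ¬1 = 0)
with h[Γ] ⊆ {1} satisfies h(α) = 1. -/
def DerivN (Γ : Set Fm) (α : Fm) : Prop :=
  ∀ h : Fm → Bool, (∀ φ : Fm, h (Fm.neg φ) = !(h φ)) →
    (∀ γ ∈ Γ, h γ = true) → h α = true

def IsNegHom (h : Fm → Bool) : Prop :=
  ∀ φ : Fm, h (Fm.neg φ) = !(h φ)

theorem Deriv.sound {Γ : Set Fm} {α : Fm} (hd : Deriv Γ α) : DerivN Γ α := by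
  intro h hh hΓ
  induction hd with
  | mem hm => exact hΓ _ hm
  | r1 _ _ ih ihneg => simp [hh, ih] at ihneg
  | r2 _ ih => simp [hh, ih]
  | r3 _ ih => simpa [hh] using ih

def Fm.parity : Fm → Bool
  | .var _ => false
  | .neg φ => !φ.parity

theorem isNegHom_parity : IsNegHom Fm.parity := fun _ => rfl

open Classical in
noncomputable def counterValuation (Γ : Set Fm) (β : Fm) (φ : Fm) : Bool :=
  if Deriv Γ φ then true
  else if Deriv Γ (Fm.neg φ) then false
  else xor φ.parity β.parity

section counterValuation

variable {Γ : Set Fm} {β : Fm}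

theorem counterValuation_of_deriv {φ : Fm} (hφ : Deriv Γ φ) : counterValuation Γ β φ = true := by
  simp [counterValuation, hφ]

theorem counterValuation_self (hβ : ¬ Deriv Γ β) : counterValuation Γ β β = false := by
  by_cases hneg : Deriv Γ (Fm.neg β) <;> simp [counterValuation, hβ, hneg]

theorem isNegHom_counterValuation (hΓ : ∀ φ, Deriv Γ φ → ¬ Deriv Γ (Fm.neg φ)) :
    IsNegHom (counterValuation Γ β) := by
  intro φ
  by_cases hφ : Deriv Γ φ
  · simp [counterValuation, hφ, hΓ φ hφ, Deriv.r2 hφ]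
  by_cases hnφ : Deriv Γ (Fm.neg φ)
  · simp [counterValuation, hφ, hnφ]
  have hnnφ : ¬ Deriv Γ (Fm.neg (Fm.neg φ)) := fun h => hφ h.r3
  simp [counterValuation, hφ, hnφ, hnnφ, isNegHom_parity φ]

end counterValuation

theorem Deriv.complete {Γ : Set Fm} {α : Fm} (hN : DerivN Γ α) : Deriv Γ α := by
  by_contra hα
  have hΓ : ∀ φ, Deriv Γ φ → ¬ Deriv Γ (Fm.neg φ) := fun φ hφ hnφ => hα (.r1 hφ hnφ)
  have := hN (counterValuation Γ α) (isNegHom_counterValuation hΓ)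
    fun γ hγ => counterValuation_of_deriv (.mem hγ)
  simp [counterValuation_self hα] at this

/-- The Hilbert calculus (R1)–(R3) axiomatizes the {¬}-fragment of CPL. -/
theorem stmt5 (Γ : Set Fm) (α : Fm) : Deriv Γ α ↔ DerivN Γ α :=
  ⟨Deriv.sound, Deriv.complete⟩
end

section
/- Let A be an algebra with a unary operation ¬ and F ⊆ A. Then F is an S_N-filter of A if and only if: (1) for all a ∈ A, if a ∈ F and ¬a ∈ F then F = A; and (2) for all a ∈ A, a ∈ F if and only if ¬¬a ∈ F. -/
/-- F ⊆ A is an S_N-filter of the algebra ⟨A, neg⟩ if for all Γ ∪ {α} ⊆ Fm with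
Γ ⊢_N α and every homomorphism h : Fm → A, h[Γ] ⊆ F implies h(α) ∈ F. -/
def IsSNFilter {A : Type*} (neg : A → A) (F : Set A) : Prop :=
  ∀ (Γ : Set Fm) (α : Fm), DerivN Γ α →
    ∀ h : Fm → A, (∀ φ : Fm, h (Fm.neg φ) = neg (h φ)) →
      (∀ γ ∈ Γ, h γ ∈ F) → h α ∈ F

/-- `Fig neg B` is the least S_N-filter of ⟨A, neg⟩ containing B
(the intersection of all S_N-filters containing B). -/
def Fig {A : Type*} (neg : A → A) (B : Set A) : Set A :=
  {a | ∀ F : Set A, IsSNFilter neg F → B ⊆ F → a ∈ F}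

/-!
Every formula is a variable under `n` negations, and under condition (2) its value lies in `F`
exactly when the variable's value, negated `n mod 2` times, does. Semantically, `Γ ⊢_N α` holds
only if `Γ ∪ {¬α}` contains two literals `p` and `¬p` up to double negation (otherwise reading
off the even literals gives a satisfying valuation), i.e. only if `Γ` is contradictory or
contains `α` up to double negation. Condition (1) handles the first case and (2) the second.
-/

namespace Fm

def base : Fm → ℕ
  | var n => n
  | neg φ => base φ

def deg : Fm → ℕ
  | var _ => 0
  | neg φ => deg φ + 1

def lift {A : Type*} (neg : A → A) (g : ℕ → A) : Fm → A
  | var n => g n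
  | Fm.neg φ => neg (lift neg g φ)

theorem lift_neg {A : Type*} (neg : A → A) (g : ℕ → A) (φ : Fm) :
    lift neg g (Fm.neg φ) = neg (lift neg g φ) := rfl

theorem hom_eq_iterate {A : Type*} {neg : A → A} {h : Fm → A}
    (hh : ∀ φ, h (Fm.neg φ) = neg (h φ)) (φ : Fm) :
    h φ = neg^[φ.deg] (h (var φ.base)) := by
  induction φ with
  | var _ => rfl
  | neg ψ ih => rw [hh, ih, deg, base, Function.iterate_succ_apply']

def SameLiteral (φ ψ : Fm) : Prop :=
  φ.base = ψ.base ∧ φ.deg % 2 = ψ.deg % 2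

theorem SameLiteral.symm {φ ψ : Fm} (h : φ.SameLiteral ψ) : ψ.SameLiteral φ :=
  ⟨h.1.symm, h.2.symm⟩

theorem sameLiteral_neg_neg (φ : Fm) : (neg (neg φ)).SameLiteral φ :=
  ⟨rfl, by simp only [deg]; omega⟩

end Fm

open Fm

section DoubleNegation

variable {A : Type*} {neg : A → A} {F : Set A}

theorem iterate_mem_iff_mod_two (hF : ∀ a, a ∈ F ↔ neg (neg a) ∈ F) (n : ℕ) (x : A) :
    neg^[n] x ∈ F ↔ neg^[n % 2] x ∈ F := by
  induction n using Nat.twoStepInduction with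
  | zero => rfl
  | one => rfl
  | more n ih _ =>
    rw [Function.iterate_succ_apply', Function.iterate_succ_apply', ← hF, ih,
      Nat.add_mod_right]

theorem mem_iff_of_sameLiteral (hF : ∀ a, a ∈ F ↔ neg (neg a) ∈ F) {h : Fm → A}
    (hh : ∀ φ, h (Fm.neg φ) = neg (h φ)) {φ ψ : Fm} (hφψ : φ.SameLiteral ψ) :
    h φ ∈ F ↔ h ψ ∈ F := by
  rw [hom_eq_iterate hh φ, hom_eq_iterate hh ψ, iterate_mem_iff_mod_two hF φ.deg,
    iterate_mem_iff_mod_two hF ψ.deg, hφψ.1, hφψ.2]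

end DoubleNegation

theorem bool_iterate_not_eq_true_iff (n : ℕ) (b : Bool) :
    (!·)^[n] b = true ↔ (!·)^[n % 2] b = true :=
  iterate_mem_iff_mod_two (F := {true}) (by simp) n b

theorem derivN_singleton_of_sameLiteral {β α : Fm} (hβα : β.SameLiteral α) : DerivN {β} α :=
  fun v hv hβ => (mem_iff_of_sameLiteral (F := {true}) (by simp) hv hβα).1 (hβ β rfl)

theorem exists_valuation_of_not_sameLiteral_neg {Δ : Set Fm}
    (hΔ : ∀ β ∈ Δ, ∀ γ ∈ Δ, ¬ β.SameLiteral (Fm.neg γ)) :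
    ∃ v : Fm → Bool, (∀ φ, v (Fm.neg φ) = !v φ) ∧ ∀ δ ∈ Δ, v δ = true := by
  classical
  let g : ℕ → Bool := fun q => decide (∃ β ∈ Δ, β.base = q ∧ β.deg % 2 = 0)
  refine ⟨lift (!·) g, lift_neg _ g, fun δ hδ => ?_⟩
  rw [hom_eq_iterate (lift_neg _ g), bool_iterate_not_eq_true_iff]
  rcases Nat.mod_two_eq_zero_or_one δ.deg with heven | hodd
  · simpa [heven, lift, g] using ⟨δ, hδ, rfl, heven⟩
  · simp only [hodd, Function.iterate_one, lift, g, Bool.not_eq_eq_eq_not, Bool.not_true,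
      decide_eq_false_iff_not, not_exists, not_and]
    intro β hβ hbase heven
    exact hΔ β hβ δ hδ ⟨hbase, by simp only [deg]; omega⟩

theorem DerivN.exists_sameLiteral {Γ : Set Fm} {α : Fm} (hΓα : DerivN Γ α) :
    (∃ β ∈ Γ, ∃ γ ∈ Γ, β.SameLiteral (Fm.neg γ)) ∨ ∃ β ∈ Γ, β.SameLiteral α := by
  by_contra! hcon
  obtain ⟨hclash, hequiv⟩ := hcon
  have hΔ : ∀ β ∈ insert (Fm.neg α) Γ, ∀ γ ∈ insert (Fm.neg α) Γ,
      ¬ β.SameLiteral (Fm.neg γ) := by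
    rintro β (rfl | hβ) γ (rfl | hγ) ⟨hbase, hdeg⟩ <;> simp only [base, deg] at hbase hdeg
    · omega
    · exact hequiv γ hγ ⟨hbase.symm, by omega⟩
    · exact hequiv β hβ ⟨hbase, by omega⟩
    · exact hclash β hβ γ hγ ⟨hbase, by simpa only [deg] using hdeg⟩
  obtain ⟨v, hv, hvΔ⟩ := exists_valuation_of_not_sameLiteral_neg hΔ
  have hα := hΓα v hv fun γ hγ => hvΔ γ (Set.mem_insert_of_mem _ hγ)
  simpa [hv, hα] using hvΔ (Fm.neg α) (Set.mem_insert _ _)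

section SNFilter

variable {A : Type*} {neg : A → A} {F : Set A}

theorem IsSNFilter.eq_univ_of_mem_of_neg_mem (hF : IsSNFilter neg F) {a : A} (ha : a ∈ F)
    (hna : neg a ∈ F) : F = Set.univ := by
  refine Set.eq_univ_of_forall fun b => ?_
  have hexplosion : DerivN {var 0, Fm.neg (var 0)} (var 1) := by
    intro v hv hΓ
    have hp := hΓ (var 0) (by simp)
    simpa [hv, hp] using hΓ (Fm.neg (var 0)) (by simp)
  refine hF _ _ hexplosion (lift neg fun n => if n = 0 then a else b) (lift_neg _ _) ?_
  rintro γ (rfl | rfl) <;> simpa [lift]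

theorem IsSNFilter.mem_iff_neg_neg_mem (hF : IsSNFilter neg F) (a : A) :
    a ∈ F ↔ neg (neg a) ∈ F := by
  have hsingle {β α : Fm} (hβα : β.SameLiteral α) (hβ : lift neg (fun _ => a) β ∈ F) :=
    hF {β} α (derivN_singleton_of_sameLiteral hβα) _ (lift_neg _ _) (by simpa using hβ)
  exact ⟨fun ha => hsingle (sameLiteral_neg_neg (var 0)).symm ha,
    fun ha => hsingle (sameLiteral_neg_neg (var 0)) ha⟩

theorem isSNFilter_of_explosion_of_doubleNeg (hexplosion : ∀ a, a ∈ F → neg a ∈ F → F = Set.univ)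
    (hdn : ∀ a, a ∈ F ↔ neg (neg a) ∈ F) : IsSNFilter neg F := by
  intro Γ α hΓα h hh hΓ
  rcases hΓα.exists_sameLiteral with ⟨β, hβ, γ, hγ, hβγ⟩ | ⟨β, hβ, hβα⟩
  · have hnγ : neg (h γ) ∈ F := hh γ ▸ (mem_iff_of_sameLiteral hdn hh hβγ).1 (hΓ β hβ)
    simp [hexplosion _ (hΓ γ hγ) hnγ]
  · exact (mem_iff_of_sameLiteral hdn hh hβα).1 (hΓ β hβ)

end SNFilter

/-- F is an S_N-filter of ⟨A, neg⟩ iff (1) a ∈ F and ¬a ∈ F imply F = A, and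
(2) a ∈ F iff ¬¬a ∈ F. -/
theorem stmt7 {A : Type*} (neg : A → A) (F : Set A) :
    IsSNFilter neg F ↔
      ((∀ a : A, a ∈ F → neg a ∈ F → F = Set.univ) ∧
       (∀ a : A, a ∈ F ↔ neg (neg a) ∈ F)) :=
  ⟨fun hF => ⟨fun _ => hF.eq_univ_of_mem_of_neg_mem, hF.mem_iff_neg_neg_mem⟩,
    fun ⟨hexplosion, hdn⟩ => isSNFilter_of_explosion_of_doubleNeg hexplosion hdn⟩
end

section
/- Let A be an algebra with a unary operation ¬ and b ∈ A such that ¬ˢb ≠ ¬ᵗb for every even s and odd t. Then: (1) Fig({b}) = {a ∈ A : ∃ even s, t with ¬ˢa = ¬ᵗb}; (B4) if a ∈ Fig({b}) then b ∈ Fig({a}); (B5) if a ∈ Fig({b}) then ¬b ∈ Fig({¬a}). -/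
/-! The set `C = evenClass neg b` of elements meeting the orbit of `b` at even depths is
closed under `¬¬` in both directions, and the hypothesis on `b` says exactly that `a` and `¬a` never both lie in `C`.
A set with these two properties is an S_N-filter: every formula is `¬ᵏp` for a variable `p`, so
a counter-model of `Γ ⊢_N α` in `2_¬` is read off from membership in `C`, with the variable of
`α` set so as to falsify `α`. Conversely, `p ⊢_N ¬¬p` and `¬¬p ⊢_N p` force every S_N-filter
containing `b` to contain `C`. (B4) and (B5) follow because the defining relation of `C` is
symmetric and commutes with `¬`. -/

namespace Fm

def eval {A : Type*} (neg : A → A) (v : ℕ → A) : Fm → A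
  | var n => v n
  | Fm.neg φ => neg (eval neg v φ)

theorem eval_neg_iterate {A : Type*} (neg : A → A) (v : ℕ → A) (k : ℕ) (φ : Fm) :
    eval neg v (Fm.neg^[k] φ) = neg^[k] (eval neg v φ) :=
  Function.Semiconj.iterate_right (f := eval neg v) (ga := Fm.neg) (fun _ => rfl) k φ

theorem exists_eq_neg_iterate_var : ∀ φ : Fm, ∃ k m, φ = Fm.neg^[k] (var m)
  | var m => ⟨0, m, rfl⟩
  | Fm.neg φ => by
    obtain ⟨k, m, rfl⟩ := exists_eq_neg_iterate_var φ
    exact ⟨k + 1, m, (Function.iterate_succ_apply' _ _ _).symm⟩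

end Fm

theorem Bool.not_iterate_eq_true_iff (j : ℕ) (c : Bool) :
    not^[j] c = true ↔ (c = true ↔ Even j) := by
  rcases Nat.even_or_odd j with hj | hj
  · simp [Bool.involutive_not.iterate_even hj, hj]
  · simp [Bool.involutive_not.iterate_odd hj, Nat.not_even_iff_odd.mpr hj]

theorem derivN_neg_iterate_var {s t : ℕ} (hs : Even s) (ht : Even t) :
    DerivN {Fm.neg^[s] (Fm.var 0)} (Fm.neg^[t] (Fm.var 0)) := by
  intro v hv hΓ
  have hv' : Function.Semiconj v Fm.neg not := hv
  have := hΓ _ rfl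
  rw [hv'.iterate_right, Bool.involutive_not.iterate_even hs] at this
  rwa [hv'.iterate_right, Bool.involutive_not.iterate_even ht]

theorem IsSNFilter.iterate_mem_of_iterate_mem {A : Type*} {neg : A → A} {F : Set A}
    (hF : IsSNFilter neg F) {s t : ℕ} (hs : Even s) (ht : Even t) {x : A}
    (hx : neg^[s] x ∈ F) : neg^[t] x ∈ F := by
  have := hF _ _ (derivN_neg_iterate_var hs ht) (Fm.eval neg fun _ => x) (fun _ => rfl)
    (by rintro γ rfl; rwa [Fm.eval_neg_iterate])
  rwa [Fm.eval_neg_iterate] at this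

section ParityClosed

variable {A : Type*} {neg : A → A} {S : Set A}

theorem iterate_mem_iff_of_even (hS : ∀ x, neg (neg x) ∈ S ↔ x ∈ S) {k : ℕ} (hk : Even k)
    (x : A) : neg^[k] x ∈ S ↔ x ∈ S := by
  obtain ⟨i, rfl⟩ := hk
  induction i with
  | zero => rfl
  | succ i ih =>
    rw [show i + 1 + (i + 1) = 2 + (i + i) by omega, Function.iterate_add_apply]
    exact (hS _).trans ih

theorem iterate_mem_iff_of_odd (hS : ∀ x, neg (neg x) ∈ S ↔ x ∈ S) {k : ℕ} (hk : Odd k)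
    (x : A) : neg^[k] x ∈ S ↔ neg x ∈ S := by
  obtain ⟨i, rfl⟩ := hk
  exact iterate_mem_iff_of_even hS (even_two_mul i) (neg x)

theorem iterate_mem_iff_of_iterate_mem (hS : ∀ x, neg (neg x) ∈ S ↔ x ∈ S)
    (hdisj : ∀ x ∈ S, neg x ∉ S) {x : A} {j : ℕ} (hj : neg^[j] x ∈ S) (k : ℕ) :
    neg^[k] x ∈ S ↔ (Even k ↔ Even j) := by
  rcases Nat.even_or_odd j with hje | hjo <;> rcases Nat.even_or_odd k with hke | hko
  · simpa [hje, hke, iterate_mem_iff_of_even hS] using hj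
  · rw [iterate_mem_iff_of_even hS hje] at hj
    simpa [iterate_mem_iff_of_odd hS hko, hje, Nat.not_even_iff_odd.mpr hko] using hdisj _ hj
  · rw [iterate_mem_iff_of_odd hS hjo] at hj
    simpa [iterate_mem_iff_of_even hS hke, hke, Nat.not_even_iff_odd.mpr hjo]
      using fun hx => hdisj _ hx hj
  · simpa [iterate_mem_iff_of_odd hS, hko, hjo, Nat.not_even_iff_odd.mpr hko,
      Nat.not_even_iff_odd.mpr hjo] using hj

theorem isSNFilter_of_neg_neg_mem_iff (hS : ∀ x, neg (neg x) ∈ S ↔ x ∈ S)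
    (hdisj : ∀ x ∈ S, neg x ∉ S) : IsSNFilter neg S := by
  intro Γ α hΓα h hh hΓ
  have hh' : Function.Semiconj h Fm.neg neg := hh
  obtain ⟨k, m, rfl⟩ := Fm.exists_eq_neg_iterate_var α
  rw [hh'.iterate_right]
  by_contra hα
  -- the variable of `α` gets the value falsifying `α`; this is consistent with `Γ` because
  -- `¬ᵏ h(p)` is outside the `¬¬`-closed set `S`
  classical
  let v : ℕ → Bool := Function.update (fun n => decide (h (Fm.var n) ∈ S)) m (decide (Odd k))
  have hv : ∀ j n, neg^[j] (h (Fm.var n)) ∈ S → (v n = true ↔ Even j) := by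
    intro j n hj
    have := iterate_mem_iff_of_iterate_mem hS hdisj hj
    by_cases hn : n = m
    · subst hn
      have := (this k).not.mp hα
      simp only [v, Function.update_self, decide_eq_true_eq, ← Nat.not_even_iff_odd]
      tauto
    · simpa [v, hn] using this 0
  have := hΓα (Fm.eval not v) (fun _ => rfl) fun γ hγ => by
    obtain ⟨j, n, rfl⟩ := Fm.exists_eq_neg_iterate_var γ
    have hγ := hΓ _ hγ
    rw [hh'.iterate_right] at hγ
    rw [Fm.eval_neg_iterate, Bool.not_iterate_eq_true_iff]
    exact hv j n hγ
  rw [Fm.eval_neg_iterate, Bool.not_iterate_eq_true_iff] at this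
  simp [v, Fm.eval, ← Nat.not_even_iff_odd] at this

end ParityClosed

section EvenClass

variable {A : Type*} (neg : A → A)

def evenClass (b : A) : Set A :=
  {a | ∃ s t : ℕ, Even s ∧ Even t ∧ neg^[s] a = neg^[t] b}

variable {neg}

theorem neg_neg_mem_evenClass_iff (b x : A) :
    neg (neg x) ∈ evenClass neg b ↔ x ∈ evenClass neg b := by
  constructor
  · rintro ⟨s, t, hs, ht, h⟩
    exact ⟨s + 2, t, hs.add even_two, ht, h⟩
  · rintro ⟨s, t, hs, ht, h⟩
    refine ⟨s, 2 + t, hs, even_two.add ht, ?_⟩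
    rw [Function.iterate_add_apply, ← h, ← Function.iterate_add_apply, add_comm]
    rfl

theorem neg_not_mem_evenClass {b : A}
    (hb : ∀ s t : ℕ, Even s → Odd t → neg^[s] b ≠ neg^[t] b) :
    ∀ x ∈ evenClass neg b, neg x ∉ evenClass neg b := by
  rintro x ⟨s, t, hs, ht, h⟩ ⟨s', t', hs', ht', h'⟩
  refine hb (s + t') (s' + 1 + t) (hs.add ht') (hs'.add_one.add_even ht) ?_
  calc neg^[s + t'] b = neg^[s] (neg^[s' + 1] x) := by
        rw [Function.iterate_add_apply, ← h', Function.iterate_succ_apply]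
    _ = neg^[s' + 1] (neg^[s] x) := Function.Commute.iterate_iterate_self neg s (s' + 1) x
    _ = neg^[s' + 1 + t] b := by rw [h, ← Function.iterate_add_apply]

theorem evenClass_symm {a b : A} (h : a ∈ evenClass neg b) : b ∈ evenClass neg a := by
  obtain ⟨s, t, hs, ht, h⟩ := h
  exact ⟨t, s, ht, hs, h.symm⟩

theorem neg_mem_evenClass_neg {a b : A} (h : a ∈ evenClass neg b) :
    neg a ∈ evenClass neg (neg b) := by
  obtain ⟨s, t, hs, ht, h⟩ := h
  refine ⟨s, t, hs, ht, ?_⟩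
  rw [← Function.Commute.self_iterate neg s a, ← Function.Commute.self_iterate neg t b, h]

theorem evenClass_subset_Fig_singleton (b : A) : evenClass neg b ⊆ Fig neg {b} := by
  rintro a ⟨s, t, hs, ht, h⟩ F hF hb
  have hbt : neg^[t] b ∈ F := hF.iterate_mem_of_iterate_mem (s := 0) Even.zero ht (hb rfl)
  exact hF.iterate_mem_of_iterate_mem (t := 0) hs Even.zero (h ▸ hbt)

theorem Fig_singleton_eq_evenClass {b : A}
    (hb : ∀ s t : ℕ, Even s → Odd t → neg^[s] b ≠ neg^[t] b) :
    Fig neg {b} = evenClass neg b := by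
  refine Set.Subset.antisymm (fun a ha => ha _ ?_ ?_) ?_
  · exact isSNFilter_of_neg_neg_mem_iff (neg_neg_mem_evenClass_iff b) (neg_not_mem_evenClass hb)
  · exact Set.singleton_subset_iff.mpr ⟨0, 0, Even.zero, Even.zero, rfl⟩
  · exact evenClass_subset_Fig_singleton b

end EvenClass

/-- If ¬ˢb ≠ ¬ᵗb for every even s and odd t, then
(1) Fig({b}) = {a : ∃ even s, t with ¬ˢa = ¬ᵗb};
(B4) a ∈ Fig({b}) implies b ∈ Fig({a});
(B5) a ∈ Fig({b}) implies ¬b ∈ Fig({¬a}). -/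
theorem stmt13 {A : Type*} (neg : A → A) (b : A)
    (hb : ∀ s t : ℕ, Even s → Odd t → neg^[s] b ≠ neg^[t] b) :
    Fig neg {b} = {a : A | ∃ s t : ℕ, Even s ∧ Even t ∧ neg^[s] a = neg^[t] b} ∧
    (∀ a : A, a ∈ Fig neg {b} → b ∈ Fig neg {a}) ∧
    (∀ a : A, a ∈ Fig neg {b} → neg b ∈ Fig neg {neg a}) := by
  have hFig := Fig_singleton_eq_evenClass hb
  refine ⟨hFig, fun a ha => ?_, fun a ha => ?_⟩
  · rw [hFig] at ha
    exact evenClass_subset_Fig_singleton _ (evenClass_symm ha)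
  · rw [hFig] at ha
    exact evenClass_subset_Fig_singleton _ (evenClass_symm (neg_mem_evenClass_neg ha))
end

section
/- Let ⟨A,C⟩ be a g-matrix with a unary operation ¬ such that C({a}) = C({¬¬a}) for all a ∈ A. Then the relation θ defined by (a,b) ∈ θ iff C({a}) = C({b}) and C({¬a}) = C({¬b}) is the Tarski congruence of ⟨A,C⟩: θ is a congruence of A such that (a,b) ∈ θ implies C({a}) = C({b}), and every congruence of A with that property is contained in θ. -/
theorem stmt15_general {A : Type*} (neg : A → A) (C : Set A → Set A)
    (hdn : ∀ a : A, C {a} = C {neg (neg a)}) :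
    (Equivalence (fun a b : A => C {a} = C {b} ∧ C {neg a} = C {neg b})) ∧
    (∀ a b : A, (C {a} = C {b} ∧ C {neg a} = C {neg b}) →
      (C {neg a} = C {neg b} ∧ C {neg (neg a)} = C {neg (neg b)})) ∧
    (∀ a b : A, (C {a} = C {b} ∧ C {neg a} = C {neg b}) → C {a} = C {b}) ∧
    (∀ θ : A → A → Prop, Equivalence θ → (∀ a b : A, θ a b → θ (neg a) (neg b)) →
      (∀ a b : A, θ a b → C {a} = C {b}) →
      ∀ a b : A, θ a b → (C {a} = C {b} ∧ C {neg a} = C {neg b})) := by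
  refine ⟨⟨fun _ => ⟨rfl, rfl⟩, fun h => ⟨h.1.symm, h.2.symm⟩,
    fun h h' => ⟨h.1.trans h'.1, h.2.trans h'.2⟩⟩, ?_, fun _ _ h => h.1, ?_⟩
  · rintro a b ⟨hC, hCneg⟩
    exact ⟨hCneg, (hdn a).symm.trans (hC.trans (hdn b))⟩
  · intro θ _ hθneg hθC a b hab
    exact ⟨hθC a b hab, hθC _ _ (hθneg a b hab)⟩

/-- Let ⟨A, C⟩ be a g-matrix (C a closure operator: monotone, extensive,
idempotent) with C({a}) = C({¬¬a}) for all a. Then the relation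
θ a b ⟺ C({a}) = C({b}) ∧ C({¬a}) = C({¬b}) is the Tarski congruence of
⟨A, C⟩: it is a congruence such that θ a b implies C({a}) = C({b}), and every
congruence with that property is contained in it. -/
theorem stmt15 {A : Type*} (neg : A → A) (C : Set A → Set A)
    (hmono : ∀ X Y : Set A, X ⊆ Y → C X ⊆ C Y)
    (hext : ∀ X : Set A, X ⊆ C X)
    (hidem : ∀ X : Set A, C (C X) = C X)
    (hdn : ∀ a : A, C {a} = C {neg (neg a)}) :
    (Equivalence (fun a b : A => C {a} = C {b} ∧ C {neg a} = C {neg b})) ∧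
    (∀ a b : A, (C {a} = C {b} ∧ C {neg a} = C {neg b}) →
      (C {neg a} = C {neg b} ∧ C {neg (neg a)} = C {neg (neg b)})) ∧
    (∀ a b : A, (C {a} = C {b} ∧ C {neg a} = C {neg b}) → C {a} = C {b}) ∧
    (∀ θ : A → A → Prop, Equivalence θ → (∀ a b : A, θ a b → θ (neg a) (neg b)) →
      (∀ a b : A, θ a b → C {a} = C {b}) →
      ∀ a b : A, θ a b → (C {a} = C {b} ∧ C {neg a} = C {neg b})) :=
  stmt15_general neg C hdn
end

section
/- Let ⟨A,C⟩ be a g-matrix with a unary operation ¬ satisfying: (F5) for all a, b ∈ A, if a ∈ C({b}) and C({b}) ≠ A then ¬b ∈ C({¬a}); and (F7) for every B ⊆ A, if C(B) = A then there exist b, b' ∈ B with C({b}) = C({¬b'}). Then the Frege relation Λ, defined by (a,b) ∈ Λ iff C({a}) = C({b}), is a congruence of A (i.e., C({a}) = C({b}) implies C({¬a}) = C({¬b})). -/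
/-! If `C {a} = C {b}` is a proper closed set, then `a ∈ C {b}` and `b ∈ C {a}`, and (F5)
contraposes both memberships to `¬b ∈ C {¬a}` and `¬a ∈ C {¬b}`. If `C {a} = C {b}` is all
of `A`, then (F7) applied to `B = {a}` gives `C {a} = C {¬a}`, so `C {¬a} = A`, and likewise
`C {¬b} = A`. -/

section FregeRelation

variable {A : Type*} {neg : A → A} {C : Set A → Set A}

theorem closure_singleton_subset_of_mem (hmono : ∀ X Y : Set A, X ⊆ Y → C X ⊆ C Y)
    (hidem : ∀ X : Set A, C (C X) = C X) {x y : A} (hx : x ∈ C {y}) : C {x} ⊆ C {y} :=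
  calc C {x} ⊆ C (C {y}) := hmono _ _ (Set.singleton_subset_iff.mpr hx)
    _ = C {y} := hidem _

theorem closure_neg_eq_univ_of_closure_eq_univ
    (hF7 : ∀ B : Set A, C B = Set.univ → ∃ b ∈ B, ∃ b' ∈ B, C {b} = C {neg b'})
    {c : A} (hc : C {c} = Set.univ) : C {neg c} = Set.univ := by
  obtain ⟨b, rfl, b', rfl, hbb'⟩ := hF7 {c} hc
  rw [← hbb', hc]

theorem closure_neg_eq_of_closure_eq_of_ne_univ (hmono : ∀ X Y : Set A, X ⊆ Y → C X ⊆ C Y)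
    (hext : ∀ X : Set A, X ⊆ C X) (hidem : ∀ X : Set A, C (C X) = C X)
    (hF5 : ∀ a b : A, a ∈ C {b} → C {b} ≠ Set.univ → neg b ∈ C {neg a})
    {a b : A} (hab : C {a} = C {b}) (ha : C {a} ≠ Set.univ) : C {neg a} = C {neg b} := by
  have ha_mem : a ∈ C {b} := hab ▸ hext {a} rfl
  have hb_mem : b ∈ C {a} := hab ▸ hext {b} rfl
  have hnb : neg b ∈ C {neg a} := hF5 a b ha_mem (hab ▸ ha)
  have hna : neg a ∈ C {neg b} := hF5 b a hb_mem ha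
  exact (closure_singleton_subset_of_mem hmono hidem hna).antisymm
    (closure_singleton_subset_of_mem hmono hidem hnb)

end FregeRelation

/-- Let ⟨A, C⟩ be a g-matrix (C a closure operator: monotone, extensive,
idempotent) satisfying (F5): a ∈ C({b}) and C({b}) ≠ A imply ¬b ∈ C({¬a}),
and (F7): C(B) = A implies there are b, b' ∈ B with C({b}) = C({¬b'}).
Then the Frege relation (a,b) ↦ C({a}) = C({b}) is a congruence, i.e.
C({a}) = C({b}) implies C({¬a}) = C({¬b}). -/
theorem stmt16 {A : Type*} (neg : A → A) (C : Set A → Set A)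
    (hmono : ∀ X Y : Set A, X ⊆ Y → C X ⊆ C Y)
    (hext : ∀ X : Set A, X ⊆ C X)
    (hidem : ∀ X : Set A, C (C X) = C X)
    (hF5 : ∀ a b : A, a ∈ C {b} → C {b} ≠ Set.univ → neg b ∈ C {neg a})
    (hF7 : ∀ B : Set A, C B = Set.univ → ∃ b ∈ B, ∃ b' ∈ B, C {b} = C {neg b'}) :
    ∀ a b : A, C {a} = C {b} → C {neg a} = C {neg b} := by
  intro a b hab
  by_cases ha : C {a} = Set.univ
  · rw [closure_neg_eq_univ_of_closure_eq_univ hF7 ha,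
      closure_neg_eq_univ_of_closure_eq_univ hF7 (hab ▸ ha)]
  · exact closure_neg_eq_of_closure_eq_of_ne_univ hmono hext hidem hF5 hab ha
end
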